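/- Let Φ be a multi-Hilbertian space, J = [0,∞) or J = [0,T], and let X = {X_t}_{t∈J} and Y = {Y_t}_{t∈J} be Φ'_β-valued regular stochastic processes such that for each φ ∈ Φ, the real-valued process X[φ] = {X_t[φ]}_{t∈J} is a version of {Y_t[φ]}_{t∈J}. Then X is a version of Y (i.e., X_t = Y_t P-a.e. for each t ∈ J). Furthermore, if X and Y are both right-continuous (P-a.e. sample path t ↦ X_t(ω) ∈ Φ'_β is right-continuous, and likewise for Y), then X and Y are indistinguishable processes. -/

import Mathlib

open MeasureTheory Topology Filter Set
open scoped ENNReal NNReal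

noncomputable section

namespace Paper

universe u

variable {Φ : Type*} [AddCommGroup Φ] [Module ℝ Φ]

/-- A seminorm `p` is *Hilbertian* if `p(φ)² = Q(φ,φ)` for a symmetric non-negative
bilinear form `Q` on `Φ × Φ`. -/
def IsHilbertian (p : Seminorm ℝ Φ) : Prop :=
  ∃ Q : Φ →ₗ[ℝ] Φ →ₗ[ℝ] ℝ, (∀ x y, Q x y = Q y x) ∧ (∀ x, 0 ≤ Q x x) ∧ ∀ x, (p x) ^ 2 = Q x x

/-- The Hilbert space `Φ_p` (the completion of `Φ/ker p`) is separable; intrinsically: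
there is a countable `p`-dense subset of `Φ`. -/
def HasSeparableQuotient (p : Seminorm ℝ Φ) : Prop :=
  ∃ D : Set Φ, D.Countable ∧ ∀ x : Φ, ∀ ε : ℝ, 0 < ε → ∃ y ∈ D, p (x - y) < ε

/-- The polarization form associated to a Hilbertian seminorm `q`. -/
def polarForm (q : Seminorm ℝ Φ) (x y : Φ) : ℝ :=
  ((q (x + y)) ^ 2 - (q x) ^ 2 - (q y) ^ 2) / 2

/-- For Hilbertian seminorms `p ≤ q`, the canonical inclusion `i_{p,q} : Φ_q → Φ_p` is
Hilbert–Schmidt; intrinsically: the sums `∑ p(φᵢ)²` over finite `q`-orthonormal families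
are uniformly bounded. -/
def IsHilbertSchmidtPair (p q : Seminorm ℝ Φ) : Prop :=
  ∃ C : ℝ, ∀ (m : ℕ) (φ : Fin m → Φ),
    (∀ i j, polarForm q (φ i) (φ j) = if i = j then 1 else 0) →
    ∑ i, (p (φ i)) ^ 2 ≤ C

/-- A linear functional on `Φ` belongs to the Hilbert space `Φ'_q` (the dual of `Φ_q`)
iff it is `q`-bounded. -/
def MemDualOf (q : Seminorm ℝ Φ) (f : Φ →ₗ[ℝ] ℝ) : Prop :=
  ∃ C : ℝ, ∀ φ, |f φ| ≤ C * q φ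

/-- The dual norm `q'` on `Φ'_q`. -/
def dualNorm (q : Seminorm ℝ Φ) (f : Φ →ₗ[ℝ] ℝ) : ℝ :=
  sSup ((fun φ => |f φ|) '' {φ | q φ ≤ 1})

section TopologySection

variable [TopologicalSpace Φ]

/-- `Φ` is a nuclear space: its topology is generated by a family of Hilbertian seminorms
such that each member is dominated by another one with Hilbert–Schmidt inclusion. -/
def IsNuclearSpace (Φ : Type*) [AddCommGroup Φ] [Module ℝ Φ] [TopologicalSpace Φ] : Prop :=
  ∃ (ι : Type) (hι : Nonempty ι) (fam : SeminormFamily ℝ Φ ι),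
    (haveI := hι; WithSeminorms fam) ∧
    (∀ i, IsHilbertian (fam i)) ∧
    ∀ i, ∃ j, fam i ≤ fam j ∧ IsHilbertSchmidtPair (fam i) (fam j)

/-- `Φ` is multi-Hilbertian: its topology is generated by a family of Hilbertian
seminorms, each with separable associated Hilbert space. -/
def IsMultiHilbertian (Φ : Type*) [AddCommGroup Φ] [Module ℝ Φ] [TopologicalSpace Φ] : Prop :=
  ∃ (ι : Type) (hι : Nonempty ι) (fam : SeminormFamily ℝ Φ ι),
    (haveI := hι; WithSeminorms fam) ∧
    ∀ i, IsHilbertian (fam i) ∧ HasSeparableQuotient (fam i)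

/-- A weaker countably Hilbertian topology `θ` on `Φ`: an increasing sequence of
continuous Hilbertian seminorms with separable associated Hilbert spaces. -/
structure WCHT (Φ : Type*) [AddCommGroup Φ] [Module ℝ Φ] [TopologicalSpace Φ] where
  p : ℕ → Seminorm ℝ Φ
  mono : Monotone p
  hilb : ∀ n, IsHilbertian (p n)
  sep : ∀ n, HasSeparableQuotient (p n)
  cont : ∀ n, Continuous ⇑(p n)

/-- `f ∈ Φ'_θ = ⋃ₙ Φ'_{pₙ}`: `f` is continuous for the countably Hilbertian topology `θ`. -/
def WCHT.MemDual (θ : WCHT Φ) (f : Φ → ℝ) : Prop :=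
  ∃ (n : ℕ) (C : ℝ), ∀ φ, |f φ| ≤ C * θ.p n φ

end TopologySection

/-- Borel measurability of a map into a topological space. -/
def BorelMeasurable {Ω : Type*} [MeasurableSpace Ω] {α : Type*} [TopologicalSpace α]
    (X : Ω → α) : Prop :=
  letI := borel α
  Measurable X

/-- The distribution `μ_X` of `X`, as a Borel measure. -/
def distributionOf {Ω : Type*} [MeasurableSpace Ω] {α : Type*} [TopologicalSpace α]
    (P : Measure Ω) (X : Ω → α) : @Measure α (borel α) :=
  letI := borel α
  P.map X

/-- A Borel measure `μ` is *Radon* if for every Borel set `A` and `ε > 0` there is a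
compact `K ⊆ A` with `μ (A \ K) < ε`. -/
def IsRadon {α : Type*} [TopologicalSpace α] {mα : MeasurableSpace α}
    (μ : @Measure α mα) : Prop :=
  ∀ A : Set α, MeasurableSet[mα] A → ∀ ε : ℝ≥0∞, 0 < ε →
    ∃ K, K ⊆ A ∧ IsCompact K ∧ μ (A \ K) < ε

section ProbSection

variable {Ω : Type*} [MeasurableSpace Ω] [TopologicalSpace Φ]

/-- Continuity of `φ ↦ X(φ)` from `Φ` into `L⁰(Ω,F,P)` (convergence in probability). -/
def ContinuousInProb (P : Measure Ω) (X : Φ → Ω → ℝ) : Prop :=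
  ∀ φ₀ : Φ, ∀ ε : ℝ, 0 < ε → ∃ U ∈ 𝓝 φ₀, ∀ φ ∈ U,
    P {ω | ε ≤ |X φ ω - X φ₀ ω|} < ENNReal.ofReal ε

/-- Equicontinuity of the family `{X_t : t ∈ s}` of (linear) maps `Φ → L⁰(Ω,F,P)`. -/
def EquicontinuousInProb (P : Measure Ω) (X : ℝ → Φ → Ω → ℝ) (s : Set ℝ) : Prop :=
  ∀ ε : ℝ, 0 < ε → ∃ U ∈ 𝓝 (0 : Φ), ∀ t ∈ s, ∀ φ ∈ U,
    P {ω | ε ≤ |X t φ ω|} < ENNReal.ofReal ε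

/-- `p`-continuity of a (linear) map `Φ → L⁰(Ω,F,P)`. -/
def SeminormContinuousInProb (P : Measure Ω) (p : Seminorm ℝ Φ) (X : Φ → Ω → ℝ) : Prop :=
  ∀ ε : ℝ, 0 < ε → ∃ δ : ℝ, 0 < δ ∧ ∀ φ : Φ, p φ < δ →
    P {ω | ε ≤ |X φ ω|} < ENNReal.ofReal ε

/-- A cylindrical process in `Φ'`: for each `t ∈ s`, a linear map `Φ → L⁰(Ω,F,P)`. -/
def IsCylindricalProcess (P : Measure Ω) (X : ℝ → Φ → Ω → ℝ) (s : Set ℝ) : Prop :=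
  (∀ t ∈ s, ∀ φ : Φ, Measurable (X t φ)) ∧
  ∀ t ∈ s, ∀ (a b : ℝ) (φ ψ : Φ), ∀ᵐ ω ∂P,
    X t (a • φ + b • ψ) ω = a * X t φ ω + b * X t ψ ω

/-- A `Φ'_β`-valued random variable is *regular* if it is a.s. concentrated on the dual
of a weaker countably Hilbertian topology. -/
def IsRegularRV (P : Measure Ω) (X : Ω → (Φ →L[ℝ] ℝ)) : Prop :=
  ∃ θ : WCHT Φ, ∀ᵐ ω ∂P, θ.MemDual ⇑(X ω)

end ProbSection

/-- Right-continuity with left limits (càdlàg) of a path on a set `s ⊆ ℝ`. -/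
def CadlagOn {α : Type*} [TopologicalSpace α] (f : ℝ → α) (s : Set ℝ) : Prop :=
  (∀ t ∈ s, ContinuousWithinAt f (s ∩ Ici t) t) ∧
  ∀ t ∈ s, (𝓝[s ∩ Iio t] t).NeBot → ∃ l : α, Tendsto f (𝓝[s ∩ Iio t] t) (𝓝 l)

/-- Path regularity: continuous (`cts = true`) or càdlàg (`cts = false`) paths on `s`. -/
def PathReg {α : Type*} [TopologicalSpace α] (cts : Bool) (f : ℝ → α) (s : Set ℝ) : Prop :=
  if cts then ContinuousOn f s else CadlagOn f s

/-- Path regularity of a `Φ'_q`-valued path, in the dual norm `q'`. -/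
def PathRegDual (cts : Bool) (q : Seminorm ℝ Φ) (f : ℝ → (Φ →ₗ[ℝ] ℝ)) (s : Set ℝ) : Prop :=
  if cts then ∀ t ∈ s, Tendsto (fun u => dualNorm q (f u - f t)) (𝓝[s] t) (𝓝 0)
  else ((∀ t ∈ s, Tendsto (fun u => dualNorm q (f u - f t)) (𝓝[s ∩ Ici t] t) (𝓝 0)) ∧
    ∀ t ∈ s, (𝓝[s ∩ Iio t] t).NeBot → ∃ l : Φ →ₗ[ℝ] ℝ, MemDualOf q l ∧
      Tendsto (fun u => dualNorm q (f u - l)) (𝓝[s ∩ Iio t] t) (𝓝 0))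

/-- The real-valued process `Z` has a version with continuous (resp. càdlàg) paths on `s`. -/
def HasPathVersion {Ω : Type*} [MeasurableSpace Ω] (P : Measure Ω) (cts : Bool)
    (Z : ℝ → Ω → ℝ) (s : Set ℝ) : Prop :=
  ∃ W : ℝ → Ω → ℝ, (∀ t ∈ s, Measurable (W t)) ∧
    (∀ᵐ ω ∂P, PathReg cts (fun t => W t ω) s) ∧ ∀ t ∈ s, ∀ᵐ ω ∂P, W t ω = Z t ω

/-!
A functional in `Φ'_θ` is bounded by `C · pₙ` for one continuous Hilbertian seminorm `pₙ` of
`θ`. Two functionals bounded by `C · p` and `C' · q` are therefore determined by their values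
on a countable `(p + q)`-dense set, which exists because `Φ_p` and `Φ_q` are separable. Taking
the union over all pairs `(pₙ, p'ₘ)` of the two countably Hilbertian topologies, `X_t` and
`Y_t` agree a.s. on one countable set, hence a.s. everywhere.

For indistinguishability, a countable dense subset of `J` together with the (countably many)
points of `J` isolated on the right is a countable set from which every `t ∈ J` is approached
within `J ∩ [t, ∞)`; right-continuity carries the a.s. equality on it to all of `J`.
-/

theorem HasSeparableQuotient.add {p q : Seminorm ℝ Φ} (hp : HasSeparableQuotient p)
    (hq : HasSeparableQuotient q) : HasSeparableQuotient (p + q) := by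
  obtain ⟨Dp, hDp, hp⟩ := hp
  obtain ⟨Dq, hDq, hq⟩ := hq
  -- a point within `1/(k+1)` of both `a ∈ Dp` and `b ∈ Dq`, whenever there is one
  let pick : Φ × Φ × ℕ → Φ := fun c => Classical.epsilon fun z =>
    p (z - c.1) < 1 / (c.2.2 + 1) ∧ q (z - c.2.1) < 1 / (c.2.2 + 1)
  refine ⟨pick '' (Dp ×ˢ Dq ×ˢ univ), (hDp.prod (hDq.prod countable_univ)).image pick, ?_⟩
  intro x ε hε
  obtain ⟨k, hk⟩ := exists_nat_one_div_lt (by positivity : 0 < ε / 4)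
  set δ : ℝ := 1 / (k + 1)
  obtain ⟨a, ha, hxa⟩ := hp x δ Nat.one_div_pos_of_nat
  obtain ⟨b, hb, hxb⟩ := hq x δ Nat.one_div_pos_of_nat
  set z := pick (a, b, k)
  have hz : p (z - a) < δ ∧ q (z - b) < δ := Classical.epsilon_spec
    (show ∃ w, p (w - a) < δ ∧ q (w - b) < δ from ⟨x, hxa, hxb⟩)
  have close : ∀ r : Seminorm ℝ Φ, ∀ c, r (x - c) < δ → r (z - c) < δ → r (x - z) < 2 * δ :=
    fun r c hxc hzc => by
      have := map_sub_le_add r (x - c) (z - c)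
      rw [sub_sub_sub_cancel_right] at this
      linarith
  refine ⟨z, ⟨(a, b, k), ⟨ha, hb, trivial⟩, rfl⟩, ?_⟩
  rw [add_apply]
  linarith [close p a hxa hz.1, close q b hxb hz.2]

theorem eq_of_eqOn_of_abs_le_mul {F : Type*} [FunLike F Φ ℝ] [AddMonoidHomClass F Φ ℝ]
    {p q : Seminorm ℝ Φ} {f g : F} {C C' : ℝ} (hf : ∀ φ, |f φ| ≤ C * p φ)
    (hg : ∀ φ, |g φ| ≤ C' * q φ) {D : Set Φ}
    (hD : ∀ x : Φ, ∀ ε : ℝ, 0 < ε → ∃ y ∈ D, (p + q) (x - y) < ε) (hfg : EqOn f g D) :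
    f = g := by
  set K := |C| + |C'| with hK
  have bound : ∀ φ, |f φ - g φ| ≤ K * (p + q) φ := fun φ => by
    have hp := apply_nonneg p φ
    have hq := apply_nonneg q φ
    calc |f φ - g φ| ≤ |f φ| + |g φ| := abs_sub _ _
      _ ≤ |C| * p φ + |C'| * q φ := by
        gcongr <;> [exact (hf φ).trans (by gcongr; exact le_abs_self C);
          exact (hg φ).trans (by gcongr; exact le_abs_self C')]
      _ ≤ K * (p + q) φ := by
        rw [add_apply, hK]; nlinarith [abs_nonneg C, abs_nonneg C']
  refine DFunLike.ext f g fun x => eq_of_forall_dist_le fun δ hδ => ?_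
  obtain ⟨ε, hε, hKε⟩ := exists_pos_mul_lt hδ K
  obtain ⟨y, hy, hxy⟩ := hD x ε hε
  calc dist (f x) (g x) = |f (x - y) - g (x - y)| := by
        rw [Real.dist_eq, map_sub, map_sub, hfg hy, sub_sub_sub_cancel_right]
    _ ≤ K * (p + q) (x - y) := bound _
    _ ≤ K * ε := by gcongr
    _ ≤ δ := hKε.le

section Regular

variable [TopologicalSpace Φ]

theorem WCHT.exists_countable_determining_set {F : Type*} [FunLike F Φ ℝ]
    [AddMonoidHomClass F Φ ℝ] (θ θ' : WCHT Φ) :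
    ∃ D : Set Φ, D.Countable ∧ ∀ f g : F, θ.MemDual f → θ'.MemDual g → EqOn f g D → f = g := by
  choose D hDc hD using fun n m => (θ.sep n).add (θ'.sep m)
  refine ⟨⋃ n, ⋃ m, D n m, countable_iUnion fun n => countable_iUnion (hDc n), ?_⟩
  rintro f g ⟨n, C, hf⟩ ⟨m, C', hg⟩ hfg
  exact eq_of_eqOn_of_abs_le_mul hf hg (hD n m)
    (hfg.mono (subset_iUnion₂ (s := fun n m => D n m) n m))

theorem IsRegularRV.ae_eq {Ω : Type*} [MeasurableSpace Ω] {P : Measure Ω}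
    {X Y : Ω → Φ →L[ℝ] ℝ} (hX : IsRegularRV P X) (hY : IsRegularRV P Y)
    (h : ∀ φ, ∀ᵐ ω ∂P, X ω φ = Y ω φ) : X =ᵐ[P] Y := by
  obtain ⟨θ, hθ⟩ := hX
  obtain ⟨θ', hθ'⟩ := hY
  obtain ⟨D, hDc, hD⟩ := θ.exists_countable_determining_set (F := Φ →L[ℝ] ℝ) θ'
  have hXY : ∀ᵐ ω ∂P, ∀ φ ∈ D, X ω φ = Y ω φ := (ae_ball_iff hDc).2 fun φ _ => h φ
  filter_upwards [hθ, hθ', hXY] with ω hXω hYω hXYω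
  exact hD (X ω) (Y ω) hXω hYω hXYω

end Regular

section RightContinuous

variable {α : Type*} [LinearOrder α] [TopologicalSpace α] [OrderTopology α]
  [SecondCountableTopology α]

theorem exists_countable_subset_forall_mem_closure_inter_Ici (J : Set α) :
    ∃ S ⊆ J, S.Countable ∧ ∀ t ∈ J, t ∈ closure (S ∩ Ici t) := by
  obtain ⟨T, hTJ, hTc, hJT⟩ :=
    (TopologicalSpace.IsSeparable.of_separableSpace J).exists_countable_dense_subset
  refine ⟨T ∪ {x ∈ J | 𝓝[J ∩ Ioi x] x = ⊥}, union_subset hTJ (sep_subset _ _),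
    hTc.union countable_setOfPred_isolated_right_within, fun t ht => ?_⟩
  by_cases hiso : 𝓝[J ∩ Ioi t] t = ⊥
  · exact subset_closure ⟨Or.inr ⟨ht, hiso⟩, le_rfl⟩
  -- points of `J` just right of `t` lie in the closure of `T ∩ Ioi t`, as `Ioi t` is open
  have hright : J ∩ Ioi t ⊆ closure (T ∩ Ioi t) := fun x ⟨hxJ, hxt⟩ => by
    rw [inter_comm T]
    exact isOpen_Ioi.inter_closure ⟨hxt, hJT hxJ⟩
  have ht' : t ∈ closure (J ∩ Ioi t) := mem_closure_iff_nhdsWithin_neBot.2 ⟨hiso⟩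
  refine closure_mono ?_ (closure_minimal hright isClosed_closure ht')
  exact fun x ⟨hxT, hxt⟩ => ⟨Or.inl hxT, le_of_lt hxt⟩

theorem ae_forall_eq_of_forall_ae_eq_of_continuousWithinAt_Ici {Ω : Type*} [MeasurableSpace Ω]
    {P : Measure Ω} {E : Type*} [TopologicalSpace E] [T2Space E] {J : Set α}
    {X Y : α → Ω → E} (h : ∀ t ∈ J, ∀ᵐ ω ∂P, X t ω = Y t ω)
    (hX : ∀ᵐ ω ∂P, ∀ t ∈ J, ContinuousWithinAt (fun s => X s ω) (J ∩ Ici t) t)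
    (hY : ∀ᵐ ω ∂P, ∀ t ∈ J, ContinuousWithinAt (fun s => Y s ω) (J ∩ Ici t) t) :
    ∀ᵐ ω ∂P, ∀ t ∈ J, X t ω = Y t ω := by
  obtain ⟨S, hSJ, hSc, hS⟩ := exists_countable_subset_forall_mem_closure_inter_Ici J
  have hXY : ∀ᵐ ω ∂P, ∀ s ∈ S, X s ω = Y s ω := (ae_ball_iff hSc).2 fun s hs => h s (hSJ hs)
  filter_upwards [hXY, hX, hY] with ω hXYω hXω hYω t ht
  have : (𝓝[S ∩ Ici t] t).NeBot := mem_closure_iff_nhdsWithin_neBot.1 (hS t ht)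
  have hsub : S ∩ Ici t ⊆ J ∩ Ici t := inter_subset_inter_left _ hSJ
  refine tendsto_nhds_unique (((hXω t ht).mono hsub).congr' ?_) ((hYω t ht).mono hsub)
  filter_upwards [self_mem_nhdsWithin] with s hs using hXYω s hs.1

end RightContinuous

theorem regular_version_and_indistinguishable_general
    {Φ : Type*} [AddCommGroup Φ] [Module ℝ Φ] [TopologicalSpace Φ]
    [ContinuousSMul ℝ Φ]
    {Ω : Type*} [MeasurableSpace Ω] (P : Measure Ω)
    (J : Set ℝ)
    (X Y : ℝ → Ω → (Φ →L[ℝ] ℝ))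
    (hXreg : ∀ t ∈ J, IsRegularRV P (X t)) (hYreg : ∀ t ∈ J, IsRegularRV P (Y t))
    (hver : ∀ φ : Φ, ∀ t ∈ J, ∀ᵐ ω ∂P, X t ω φ = Y t ω φ) :
    (∀ t ∈ J, ∀ᵐ ω ∂P, X t ω = Y t ω) ∧
    ((∀ᵐ ω ∂P, ∀ t ∈ J, ContinuousWithinAt (fun s => X s ω) (J ∩ Set.Ici t) t) →
      (∀ᵐ ω ∂P, ∀ t ∈ J, ContinuousWithinAt (fun s => Y s ω) (J ∩ Set.Ici t) t) →
      ∀ᵐ ω ∂P, ∀ t ∈ J, X t ω = Y t ω) := by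
  have version : ∀ t ∈ J, ∀ᵐ ω ∂P, X t ω = Y t ω := fun t ht =>
    (hXreg t ht).ae_eq (hYreg t ht) fun φ => hver φ t ht
  exact ⟨version, ae_forall_eq_of_forall_ae_eq_of_continuousWithinAt_Ici version⟩

/-- If `X`, `Y` are regular `Φ'_β`-valued processes on `J = [0,∞)` or
`J = [0,T]` such that `X[φ]` is a version of `Y[φ]` for each `φ`, then `X` is a version
of `Y`; if moreover both are right-continuous, then they are indistinguishable. -/
theorem regular_version_and_indistinguishable
    {Φ : Type*} [AddCommGroup Φ] [Module ℝ Φ] [TopologicalSpace Φ]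
    [IsTopologicalAddGroup Φ] [ContinuousSMul ℝ Φ]
    {Ω : Type*} [MeasurableSpace Ω] (P : Measure Ω) [IsProbabilityMeasure P] [P.IsComplete]
    (hΦ : IsMultiHilbertian Φ)
    (J : Set ℝ) (hJ : J = Set.Ici (0 : ℝ) ∨ ∃ T : ℝ, 0 < T ∧ J = Set.Icc 0 T)
    (X Y : ℝ → Ω → (Φ →L[ℝ] ℝ))
    (hXmeas : ∀ t ∈ J, BorelMeasurable (X t)) (hYmeas : ∀ t ∈ J, BorelMeasurable (Y t))
    (hXreg : ∀ t ∈ J, IsRegularRV P (X t)) (hYreg : ∀ t ∈ J, IsRegularRV P (Y t))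
    (hver : ∀ φ : Φ, ∀ t ∈ J, ∀ᵐ ω ∂P, X t ω φ = Y t ω φ) :
    (∀ t ∈ J, ∀ᵐ ω ∂P, X t ω = Y t ω) ∧
    ((∀ᵐ ω ∂P, ∀ t ∈ J, ContinuousWithinAt (fun s => X s ω) (J ∩ Set.Ici t) t) →
      (∀ᵐ ω ∂P, ∀ t ∈ J, ContinuousWithinAt (fun s => Y s ω) (J ∩ Set.Ici t) t) →
      ∀ᵐ ω ∂P, ∀ t ∈ J, X t ω = Y t ω) :=
  regular_version_and_indistinguishable_general P J X Y hXreg hYreg hver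

end Paper
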